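/- arXiv:2408.08550 — 4 statements merged into one kernel-verified Lean document; each statement's English description precedes it below -/
import Mathlib

section
/- The sequentially composed OT equals the monolithic OT with the tropically composed cost matrix: for oOTs A = (m, l, C^A), B = (l, n, C^B) and distributions a ∈ Δ^m, b ∈ Δ^n, the minimum of ⟨C^A, P^A⟩ + ⟨C^B, P^B⟩ over feasible (P^A, P^B) equals the minimum of ⟨C^A ⨟ C^B, P⟩ over couplings P of a and b. -/
/-!
Both problems are projections of one over three-way plans `Q i k j ≥ 0`, the mass sent from `i`
to `j` through `k`. A plan costs exactly `⟨C^A, P^A⟩ + ⟨C^B, P^B⟩` for its two legs `P^A`, `P^B`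
and at least `⟨C^A ⨟ C^B, P⟩` for its end-to-end coupling `P`. A feasible pair is the pair of legs
of the plan `P^A i k * P^B k j / c k` glued along the common middle marginal `c`, and a coupling
is the end-to-end coupling of the plan routing each `(i, j)` through a minimiser of
`C^A i k + C^B k j`, which attains the bound. So every value of either problem is dominated by a
value of the other, and for sets of reals this forces equal infima, bounded or not.
-/

open BigOperators

noncomputable def seqR {m l n : ℕ} (X : Matrix (Fin m) (Fin l) ℝ)
    (Y : Matrix (Fin l) (Fin n) ℝ) : Matrix (Fin m) (Fin n) ℝ :=
  fun i j => ⨅ k : Fin l, (X i k + Y k j)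

/-- Frobenius inner product of real matrices. -/
def dotM {m n : ℕ} (X Y : Matrix (Fin m) (Fin n) ℝ) : ℝ := ∑ i, ∑ j, X i j * Y i j

theorem Real.sInf_eq_of_forall_exists_le {s t : Set ℝ} (hst : ∀ x ∈ s, ∃ y ∈ t, y ≤ x)
    (hts : ∀ y ∈ t, ∃ x ∈ s, x ≤ y) : sInf s = sInf t := by
  have hlower : lowerBounds s = lowerBounds t := by
    ext c
    refine ⟨fun hc y hy => ?_, fun hc x hx => ?_⟩
    · obtain ⟨x, hx, hxy⟩ := hts y hy
      exact (hc hx).trans hxy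
    · obtain ⟨y, hy, hyx⟩ := hst x hx
      exact (hc hy).trans hyx
  have hbdd : BddBelow s ↔ BddBelow t := by rw [BddBelow, BddBelow, hlower]
  rcases s.eq_empty_or_nonempty with rfl | hs
  · rw [(t.eq_empty_of_forall_notMem fun y hy => by simpa using hts y hy)]
  obtain ⟨y, hy, -⟩ := hst hs.some hs.some_mem
  by_cases hs_bdd : BddBelow s
  · have hglb : IsGLB s (sInf t) := by
      unfold IsGLB; rw [hlower]; exact isGLB_csInf ⟨y, hy⟩ (hbdd.mp hs_bdd)
    exact (isGLB_csInf hs hs_bdd).unique hglb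
  · rw [Real.sInf_of_not_bddBelow hs_bdd, Real.sInf_of_not_bddBelow (hbdd.not.mp hs_bdd)]

theorem Finset.sum_mul_div_eq_of_sum_eq {ι : Type*} (s : Finset ι) (f : ι → ℝ) {c y : ℝ}
    (hs : ∑ i ∈ s, f i = c) (hy : c = 0 → y = 0) : ∑ i ∈ s, f i * y / c = y := by
  by_cases hc : c = 0
  · simp [hc, hy hc]
  · rw [← Finset.sum_div, ← Finset.sum_mul, hs, mul_div_cancel_left₀ _ hc]

theorem seqR_le {m l n : ℕ} (X : Matrix (Fin m) (Fin l) ℝ) (Y : Matrix (Fin l) (Fin n) ℝ)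
    (i : Fin m) (k : Fin l) (j : Fin n) : seqR X Y i j ≤ X i k + Y k j :=
  ciInf_le (Finite.bddBelow_range _) k

theorem exists_seqR_eq_add {m l n : ℕ} (hl : 0 < l) (X : Matrix (Fin m) (Fin l) ℝ)
    (Y : Matrix (Fin l) (Fin n) ℝ) :
    ∃ κ : Fin m → Fin n → Fin l, ∀ i j, seqR X Y i j = X i (κ i j) + Y (κ i j) j := by
  have : Nonempty (Fin l) := ⟨⟨0, hl⟩⟩
  choose κ hκ using fun i j => Finite.exists_min fun k : Fin l => X i k + Y k j
  exact ⟨κ, fun i j => (seqR_le X Y i (κ i j) j).antisymm (le_ciInf (hκ i j))⟩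

section ThreeWayPlan

variable {m l n : ℕ}

def firstLeg (Q : Fin m → Fin l → Fin n → ℝ) : Matrix (Fin m) (Fin l) ℝ :=
  fun i k => ∑ j, Q i k j

def secondLeg (Q : Fin m → Fin l → Fin n → ℝ) : Matrix (Fin l) (Fin n) ℝ :=
  fun k j => ∑ i, Q i k j

def endToEnd (Q : Fin m → Fin l → Fin n → ℝ) : Matrix (Fin m) (Fin n) ℝ :=
  fun i j => ∑ k, Q i k j

def planCost (CA : Matrix (Fin m) (Fin l) ℝ) (CB : Matrix (Fin l) (Fin n) ℝ)
    (Q : Fin m → Fin l → Fin n → ℝ) : ℝ :=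
  ∑ i, ∑ k, ∑ j, (CA i k + CB k j) * Q i k j

theorem sum_firstLeg_eq_sum_endToEnd (Q : Fin m → Fin l → Fin n → ℝ) (i : Fin m) :
    ∑ k, firstLeg Q i k = ∑ j, endToEnd Q i j :=
  Finset.sum_comm

theorem sum_secondLeg_eq_sum_endToEnd (Q : Fin m → Fin l → Fin n → ℝ) (j : Fin n) :
    ∑ k, secondLeg Q k j = ∑ i, endToEnd Q i j :=
  Finset.sum_comm

theorem sum_firstLeg_eq_sum_secondLeg (Q : Fin m → Fin l → Fin n → ℝ) (k : Fin l) :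
    ∑ i, firstLeg Q i k = ∑ j, secondLeg Q k j :=
  Finset.sum_comm

section Nonneg

variable {Q : Fin m → Fin l → Fin n → ℝ}

theorem firstLeg_nonneg (hQ : ∀ i k j, 0 ≤ Q i k j) (i : Fin m) (k : Fin l) :
    0 ≤ firstLeg Q i k :=
  Finset.sum_nonneg fun j _ => hQ i k j

theorem secondLeg_nonneg (hQ : ∀ i k j, 0 ≤ Q i k j) (k : Fin l) (j : Fin n) :
    0 ≤ secondLeg Q k j :=
  Finset.sum_nonneg fun i _ => hQ i k j

theorem endToEnd_nonneg (hQ : ∀ i k j, 0 ≤ Q i k j) (i : Fin m) (j : Fin n) :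
    0 ≤ endToEnd Q i j :=
  Finset.sum_nonneg fun k _ => hQ i k j

theorem dotM_seqR_endToEnd_le (hQ : ∀ i k j, 0 ≤ Q i k j) (CA : Matrix (Fin m) (Fin l) ℝ)
    (CB : Matrix (Fin l) (Fin n) ℝ) :
    dotM (seqR CA CB) (endToEnd Q) ≤ planCost CA CB Q := by
  unfold dotM endToEnd planCost
  rw [Finset.sum_congr rfl fun i _ => Finset.sum_comm]
  gcongr with i _ j _
  rw [Finset.mul_sum]
  gcongr with k
  · exact hQ i k j
  · exact seqR_le CA CB i k j

end Nonneg

theorem dotM_firstLeg_add_dotM_secondLeg (CA : Matrix (Fin m) (Fin l) ℝ)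
    (CB : Matrix (Fin l) (Fin n) ℝ) (Q : Fin m → Fin l → Fin n → ℝ) :
    dotM CA (firstLeg Q) + dotM CB (secondLeg Q) = planCost CA CB Q := by
  simp only [dotM, planCost, firstLeg, secondLeg, add_mul, Finset.sum_add_distrib, Finset.mul_sum]
  congr 1
  exact (Finset.sum_congr rfl fun _ _ => Finset.sum_comm).trans Finset.sum_comm

section Glue

variable {PA : Matrix (Fin m) (Fin l) ℝ} {PB : Matrix (Fin l) (Fin n) ℝ}

noncomputable def glue (PA : Matrix (Fin m) (Fin l) ℝ) (PB : Matrix (Fin l) (Fin n) ℝ) :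
    Fin m → Fin l → Fin n → ℝ :=
  fun i k j => PA i k * PB k j / ∑ i', PA i' k

theorem glue_nonneg (hA : ∀ i k, 0 ≤ PA i k) (hB : ∀ k j, 0 ≤ PB k j) (i : Fin m) (k : Fin l)
    (j : Fin n) : 0 ≤ glue PA PB i k j :=
  div_nonneg (mul_nonneg (hA i k) (hB k j)) (Finset.sum_nonneg fun i' _ => hA i' k)

theorem firstLeg_glue (hA : ∀ i k, 0 ≤ PA i k) (hmid : ∀ k, ∑ i, PA i k = ∑ j, PB k j) :
    firstLeg (glue PA PB) = PA := by
  ext i k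
  simp only [firstLeg, glue, mul_comm (PA i k)]
  exact Finset.sum_mul_div_eq_of_sum_eq _ _ (hmid k).symm fun hc =>
    congrFun ((Fintype.sum_eq_zero_iff_of_nonneg (hA · k)).mp hc) i

theorem secondLeg_glue (hB : ∀ k j, 0 ≤ PB k j) (hmid : ∀ k, ∑ i, PA i k = ∑ j, PB k j) :
    secondLeg (glue PA PB) = PB := by
  ext k j
  exact Finset.sum_mul_div_eq_of_sum_eq _ _ rfl fun hc =>
    congrFun ((Fintype.sum_eq_zero_iff_of_nonneg (hB k)).mp (hmid k ▸ hc)) j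

end Glue

section Route

def routeVia (κ : Fin m → Fin n → Fin l) (P : Matrix (Fin m) (Fin n) ℝ) :
    Fin m → Fin l → Fin n → ℝ :=
  fun i k j => if k = κ i j then P i j else 0

theorem routeVia_nonneg (κ : Fin m → Fin n → Fin l) {P : Matrix (Fin m) (Fin n) ℝ}
    (hP : ∀ i j, 0 ≤ P i j) (i : Fin m) (k : Fin l) (j : Fin n) : 0 ≤ routeVia κ P i k j := by
  unfold routeVia
  split_ifs
  exacts [hP i j, le_rfl]

theorem endToEnd_routeVia (κ : Fin m → Fin n → Fin l) (P : Matrix (Fin m) (Fin n) ℝ) :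
    endToEnd (routeVia κ P) = P := by
  ext i j
  simp [endToEnd, routeVia]

theorem planCost_routeVia {CA : Matrix (Fin m) (Fin l) ℝ} {CB : Matrix (Fin l) (Fin n) ℝ}
    {κ : Fin m → Fin n → Fin l} (hκ : ∀ i j, seqR CA CB i j = CA i (κ i j) + CB (κ i j) j)
    (P : Matrix (Fin m) (Fin n) ℝ) :
    planCost CA CB (routeVia κ P) = dotM (seqR CA CB) P := by
  unfold planCost routeVia dotM
  rw [Finset.sum_congr rfl fun i _ => Finset.sum_comm]
  simp [mul_ite, hκ]

end Route

end ThreeWayPlan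

theorem seqOT_eq_monolithicOT_general {m l n : ℕ} (hl : 0 < l)
    (CA : Matrix (Fin m) (Fin l) ℝ) (CB : Matrix (Fin l) (Fin n) ℝ)
    (a : Fin m → ℝ) (b : Fin n → ℝ) :
    sInf {v : ℝ | ∃ (PA : Matrix (Fin m) (Fin l) ℝ) (PB : Matrix (Fin l) (Fin n) ℝ),
        (∀ i k, 0 ≤ PA i k) ∧ (∀ k j, 0 ≤ PB k j) ∧
        (∀ i, ∑ k, PA i k = a i) ∧ (∀ j, ∑ k, PB k j = b j) ∧
        (∀ k, ∑ i, PA i k = ∑ j, PB k j) ∧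
        v = dotM CA PA + dotM CB PB}
    = sInf {v : ℝ | ∃ P : Matrix (Fin m) (Fin n) ℝ,
        (∀ i j, 0 ≤ P i j) ∧ (∀ i, ∑ j, P i j = a i) ∧ (∀ j, ∑ i, P i j = b j) ∧
        v = dotM (seqR CA CB) P} := by
  refine Real.sInf_eq_of_forall_exists_le ?_ ?_
  · rintro _ ⟨PA, PB, hA, hB, hAa, hBb, hmid, rfl⟩
    have hQ := glue_nonneg hA hB
    have hPA : firstLeg (glue PA PB) = PA := firstLeg_glue hA hmid
    have hPB : secondLeg (glue PA PB) = PB := secondLeg_glue hB hmid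
    refine ⟨_, ⟨endToEnd (glue PA PB), endToEnd_nonneg hQ, fun i => ?_, fun j => ?_, rfl⟩, ?_⟩
    · rw [← sum_firstLeg_eq_sum_endToEnd, hPA, hAa]
    · rw [← sum_secondLeg_eq_sum_endToEnd, hPB, hBb]
    · calc dotM (seqR CA CB) (endToEnd (glue PA PB)) ≤ planCost CA CB (glue PA PB) :=
            dotM_seqR_endToEnd_le hQ CA CB
        _ = dotM CA PA + dotM CB PB := by rw [← dotM_firstLeg_add_dotM_secondLeg, hPA, hPB]
  · rintro _ ⟨P, hP, hPa, hPb, rfl⟩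
    obtain ⟨κ, hκ⟩ := exists_seqR_eq_add hl CA CB
    have hQ := routeVia_nonneg κ hP
    have hQP : endToEnd (routeVia κ P) = P := endToEnd_routeVia κ P
    refine ⟨_, ⟨firstLeg (routeVia κ P), secondLeg (routeVia κ P), firstLeg_nonneg hQ,
      secondLeg_nonneg hQ, fun i => ?_, fun j => ?_, sum_firstLeg_eq_sum_secondLeg _, rfl⟩, ?_⟩
    · rw [sum_firstLeg_eq_sum_endToEnd, hQP, hPa]
    · rw [sum_secondLeg_eq_sum_endToEnd, hQP, hPb]
    · rw [dotM_firstLeg_add_dotM_secondLeg, planCost_routeVia hκ]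

theorem seqOT_eq_monolithicOT {m l n : ℕ} (hl : 0 < l)
    (CA : Matrix (Fin m) (Fin l) ℝ) (CB : Matrix (Fin l) (Fin n) ℝ)
    (a : Fin m → ℝ) (b : Fin n → ℝ)
    (ha : (∀ i, 0 ≤ a i) ∧ ∑ i, a i = 1) (hb : (∀ j, 0 ≤ b j) ∧ ∑ j, b j = 1) :
    sInf {v : ℝ | ∃ (PA : Matrix (Fin m) (Fin l) ℝ) (PB : Matrix (Fin l) (Fin n) ℝ),
        (∀ i k, 0 ≤ PA i k) ∧ (∀ k j, 0 ≤ PB k j) ∧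
        (∀ i, ∑ k, PA i k = a i) ∧ (∀ j, ∑ k, PB k j = b j) ∧
        (∀ k, ∑ i, PA i k = ∑ j, PB k j) ∧
        v = dotM CA PA + dotM CB PB}
    = sInf {v : ℝ | ∃ P : Matrix (Fin m) (Fin n) ℝ,
        (∀ i j, 0 ≤ P i j) ∧ (∀ i, ∑ j, P i j = a i) ∧ (∀ j, ∑ i, P i j = b j) ∧
        v = dotM (seqR CA CB) P} :=
  seqOT_eq_monolithicOT_general hl CA CB a b
end

section
/- The parallelly composed OT equals the monolithic OT with the block-diagonal cost matrix: assuming Σ_{i=1}^m a_i = Σ_{j=1}^n b_j, the minimum of ⟨C^A, P^A⟩ + ⟨C^B, P^B⟩ over feasible (P^A, P^B) equals the infimum of ⟨C^A ⊗ C^B, P⟩ over couplings P ∈ ℝ_{≥0}^((m+k)×(n+l)) of a and b, where ⟨·,·⟩ uses the convention ∞ · 0 = 0. -/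
/-!
A coupling of `a` and `b` has finite cost against `C^A ⊗ C^B` exactly when it puts no mass on
the off-diagonal blocks, i.e. when it is the block-diagonal plan `parP P^A P^B`; its marginals
are then split between `P^A` and `P^B`, and its cost is `⟨C^A, P^A⟩ + ⟨C^B, P^B⟩`. Hence the
finite values of the monolithic problem are exactly the values of the parallel problem. These
form a nonempty set (product couplings exist, since both blocks are balanced) that is bounded
below, and the infimum in `WithTop ℝ` ignores `⊤`.
-/

open BigOperators

noncomputable def parC {m n k l : ℕ} (A : Matrix (Fin m) (Fin n) (WithTop ℝ))
    (B : Matrix (Fin k) (Fin l) (WithTop ℝ)) :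
    Matrix (Fin (m + k)) (Fin (n + l)) (WithTop ℝ) :=
  fun i j =>
    if h1 : (i : ℕ) < m then
      if h2 : (j : ℕ) < n then A ⟨i, h1⟩ ⟨j, h2⟩ else ⊤
    else
      if h2 : (j : ℕ) < n then ⊤
      else B ⟨(i : ℕ) - m, by have := i.isLt; omega⟩ ⟨(j : ℕ) - n, by have := j.isLt; omega⟩

/-- Inner product of an extended-real cost matrix with a nonnegative real plan,
with multiplication in `WithTop ℝ` (so `∞ * 0 = 0`). -/
noncomputable def dotT {m n : ℕ} (X : Matrix (Fin m) (Fin n) (WithTop ℝ))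
    (P : Matrix (Fin m) (Fin n) ℝ) : WithTop ℝ :=
  ∑ i, ∑ j, X i j * ((P i j : ℝ) : WithTop ℝ)

section Coupling

variable {ι κ : Type*} [Fintype ι] [Fintype κ]

def IsCoupling (P : Matrix ι κ ℝ) (u : ι → ℝ) (v : κ → ℝ) : Prop :=
  (∀ i j, 0 ≤ P i j) ∧ (∀ i, ∑ j, P i j = u i) ∧ (∀ j, ∑ i, P i j = v j)

theorem IsCoupling.le_left {P : Matrix ι κ ℝ} {u : ι → ℝ} {v : κ → ℝ}
    (hP : IsCoupling P u v) (i : ι) (j : κ) : P i j ≤ u i :=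
  hP.2.1 i ▸ Finset.single_le_sum (fun j' _ => hP.1 i j') (Finset.mem_univ j)

/-- The product coupling `u i * v j / s`, where `s` is the common mass. -/
theorem exists_isCoupling {u : ι → ℝ} {v : κ → ℝ} (hu : ∀ i, 0 ≤ u i) (hv : ∀ j, 0 ≤ v j)
    (h : ∑ i, u i = ∑ j, v j) : ∃ P : Matrix ι κ ℝ, IsCoupling P u v := by
  set s := ∑ i, u i with hs
  rcases eq_or_ne s 0 with h0 | h0
  · have hu0 : ∀ i, u i = 0 := fun i =>
      (Finset.sum_eq_zero_iff_of_nonneg (fun i _ => hu i)).1 h0 i (Finset.mem_univ i)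
    have hv0 : ∀ j, v j = 0 := fun j =>
      (Finset.sum_eq_zero_iff_of_nonneg (fun j _ => hv j)).1 (h ▸ h0) j (Finset.mem_univ j)
    exact ⟨0, by simp, fun i => by simp [hu0], fun j => by simp [hv0]⟩
  · refine ⟨fun i j => u i * v j / s, fun i j => ?_, fun i => ?_, fun j => ?_⟩
    · exact div_nonneg (mul_nonneg (hu i) (hv j)) (Finset.sum_nonneg fun i _ => hu i)
    · rw [← Finset.sum_div, ← Finset.mul_sum, ← h, mul_div_cancel_right₀ _ h0]
    · rw [← Finset.sum_div, ← Finset.sum_mul, ← hs, mul_div_cancel_left₀ _ h0]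

end Coupling

theorem IsCoupling.neg_le_dotM {m n : ℕ} {P : Matrix (Fin m) (Fin n) ℝ} {u : Fin m → ℝ}
    {v : Fin n → ℝ} (hP : IsCoupling P u v) (C : Matrix (Fin m) (Fin n) ℝ) :
    -∑ i, ∑ j, |C i j| * u i ≤ dotM C P := by
  simp only [dotM, ← Finset.sum_neg_distrib]
  gcongr with i _ j _
  nlinarith [neg_abs_le (C i j), abs_nonneg (C i j), hP.1 i j, hP.le_left i j]

theorem eq_zero_of_dotT_ne_top {m n : ℕ} {X : Matrix (Fin m) (Fin n) (WithTop ℝ)}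
    {P : Matrix (Fin m) (Fin n) ℝ} (h : dotT X P ≠ ⊤) {i : Fin m} {j : Fin n} (hX : X i j = ⊤) :
    P i j = 0 := by
  by_contra hP
  refine h (WithTop.sum_eq_top.2 ⟨i, Finset.mem_univ i,
    WithTop.sum_eq_top.2 ⟨j, Finset.mem_univ j, ?_⟩⟩)
  rw [hX, WithTop.top_mul (by exact_mod_cast hP)]

section Blocks

variable {m n k l : ℕ}

section parC

-- Stated for plain functions: with `Matrix`-typed arguments `simp` cannot rewrite the
-- lambda-matrices `fun i j => ↑(CA i j)` of the theorem.
variable (A : Fin m → Fin n → WithTop ℝ) (B : Fin k → Fin l → WithTop ℝ)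

@[simp]
theorem parC_castAdd_castAdd (i : Fin m) (j : Fin n) :
    parC A B (Fin.castAdd k i) (Fin.castAdd l j) = A i j := by
  simp [parC]

@[simp]
theorem parC_castAdd_natAdd (i : Fin m) (j : Fin l) :
    parC A B (Fin.castAdd k i) (Fin.natAdd n j) = ⊤ := by
  simp [parC]

@[simp]
theorem parC_natAdd_castAdd (i : Fin k) (j : Fin n) :
    parC A B (Fin.natAdd m i) (Fin.castAdd l j) = ⊤ := by
  simp [parC]

@[simp]
theorem parC_natAdd_natAdd (i : Fin k) (j : Fin l) :
    parC A B (Fin.natAdd m i) (Fin.natAdd n j) = B i j := by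
  simp [parC]

end parC

def parP {α : Type*} [Zero α] (A : Matrix (Fin m) (Fin n) α) (B : Matrix (Fin k) (Fin l) α) :
    Matrix (Fin (m + k)) (Fin (n + l)) α :=
  (Matrix.fromBlocks A 0 0 B).submatrix finSumFinEquiv.symm finSumFinEquiv.symm

theorem isCoupling_parP_iff {PA : Matrix (Fin m) (Fin n) ℝ} {PB : Matrix (Fin k) (Fin l) ℝ}
    {a : Fin (m + k) → ℝ} {b : Fin (n + l) → ℝ} :
    IsCoupling (parP PA PB) a b ↔
      IsCoupling PA (a ∘ Fin.castAdd k) (b ∘ Fin.castAdd l) ∧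
        IsCoupling PB (a ∘ Fin.natAdd m) (b ∘ Fin.natAdd n) := by
  simp [IsCoupling, parP, Fin.forall_fin_add, Fin.sum_univ_add, and_assoc, and_left_comm]

theorem dotT_parC_parP (CA : Matrix (Fin m) (Fin n) ℝ) (CB : Matrix (Fin k) (Fin l) ℝ)
    (PA : Matrix (Fin m) (Fin n) ℝ) (PB : Matrix (Fin k) (Fin l) ℝ) :
    dotT (parC (fun i j => ((CA i j : ℝ) : WithTop ℝ)) (fun i j => ((CB i j : ℝ) : WithTop ℝ)))
      (parP PA PB) = ((dotM CA PA + dotM CB PB : ℝ) : WithTop ℝ) := by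
  simp [dotT, dotM, parP, Fin.sum_univ_add]

theorem eq_parP_of_dotT_parC_ne_top {A : Matrix (Fin m) (Fin n) (WithTop ℝ)}
    {B : Matrix (Fin k) (Fin l) (WithTop ℝ)} {P : Matrix (Fin (m + k)) (Fin (n + l)) ℝ}
    (h : dotT (parC A B) P ≠ ⊤) :
    P = parP (P.submatrix (Fin.castAdd k) (Fin.castAdd l))
      (P.submatrix (Fin.natAdd m) (Fin.natAdd n)) := by
  ext i j
  induction i using Fin.addCases <;> induction j using Fin.addCases
  case left.left | right.right => simp [parP]
  case left.right i j => simpa [parP] using eq_zero_of_dotT_ne_top h (parC_castAdd_natAdd A B i j)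
  case right.left i j => simpa [parP] using eq_zero_of_dotT_ne_top h (parC_natAdd_castAdd A B i j)

end Blocks

section Costs

variable {m n k l : ℕ} (CA : Matrix (Fin m) (Fin n) ℝ) (CB : Matrix (Fin k) (Fin l) ℝ)
  (a : Fin (m + k) → ℝ) (b : Fin (n + l) → ℝ)

def parallelCosts : Set ℝ :=
  {v | ∃ PA PB, IsCoupling PA (a ∘ Fin.castAdd k) (b ∘ Fin.castAdd l) ∧
    IsCoupling PB (a ∘ Fin.natAdd m) (b ∘ Fin.natAdd n) ∧ v = dotM CA PA + dotM CB PB}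

def monolithicCosts : Set (WithTop ℝ) :=
  {v | ∃ P, IsCoupling P a b ∧
    v = dotT (parC (fun i j => ((CA i j : ℝ) : WithTop ℝ))
      (fun i j => ((CB i j : ℝ) : WithTop ℝ))) P}

theorem coe_mem_monolithicCosts_iff {v : ℝ} :
    (v : WithTop ℝ) ∈ monolithicCosts CA CB a b ↔ v ∈ parallelCosts CA CB a b := by
  constructor
  · rintro ⟨P, hP, hv⟩
    have hP_eq := eq_parP_of_dotT_parC_ne_top (hv ▸ WithTop.coe_ne_top)
    rw [hP_eq, isCoupling_parP_iff] at hP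
    rw [hP_eq, dotT_parC_parP] at hv
    exact ⟨_, _, hP.1, hP.2, WithTop.coe_injective hv⟩
  · rintro ⟨PA, PB, hA, hB, rfl⟩
    exact ⟨parP PA PB, isCoupling_parP_iff.2 ⟨hA, hB⟩, (dotT_parC_parP ..).symm⟩

theorem bddBelow_parallelCosts : BddBelow (parallelCosts CA CB a b) :=
  ⟨_, by
    rintro _ ⟨PA, PB, hA, hB, rfl⟩
    exact add_le_add (hA.neg_le_dotM CA) (hB.neg_le_dotM CB)⟩

theorem coe_sInf_parallelCosts (hne : (parallelCosts CA CB a b).Nonempty) :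
    ((sInf (parallelCosts CA CB a b) : ℝ) : WithTop ℝ) = sInf (monolithicCosts CA CB a b) := by
  have hpre : (↑) ⁻¹' monolithicCosts CA CB a b = parallelCosts CA CB a b :=
    Set.ext fun v => coe_mem_monolithicCosts_iff CA CB a b
  obtain ⟨c, hc⟩ := bddBelow_parallelCosts CA CB a b
  rw [WithTop.sInf_eq _ _, hpre]
  · obtain ⟨v, hv⟩ := hne
    intro hsub
    exact WithTop.coe_ne_top (hsub ((coe_mem_monolithicCosts_iff CA CB a b).2 hv))
  · refine ⟨c, fun x hx => ?_⟩
    induction x using WithTop.recTopCoe with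
    | top => exact le_top
    | coe v => exact WithTop.coe_le_coe.2 (hc ((coe_mem_monolithicCosts_iff CA CB a b).1 hx))

end Costs

theorem parOT_eq_monolithicOT {m n k l : ℕ}
    (CA : Matrix (Fin m) (Fin n) ℝ) (CB : Matrix (Fin k) (Fin l) ℝ)
    (a : Fin (m + k) → ℝ) (b : Fin (n + l) → ℝ)
    (ha : (∀ i, 0 ≤ a i) ∧ ∑ i, a i = 1) (hb : (∀ j, 0 ≤ b j) ∧ ∑ j, b j = 1)
    (hbal : ∑ i : Fin m, a (Fin.castAdd k i) = ∑ j : Fin n, b (Fin.castAdd l j)) :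
    ((sInf {v : ℝ | ∃ (PA : Matrix (Fin m) (Fin n) ℝ) (PB : Matrix (Fin k) (Fin l) ℝ),
        (∀ i j, 0 ≤ PA i j) ∧ (∀ i j, 0 ≤ PB i j) ∧
        (∀ i : Fin m, ∑ j, PA i j = a (Fin.castAdd k i)) ∧
        (∀ j : Fin n, ∑ i, PA i j = b (Fin.castAdd l j)) ∧
        (∀ i : Fin k, ∑ j, PB i j = a (Fin.natAdd m i)) ∧
        (∀ j : Fin l, ∑ i, PB i j = b (Fin.natAdd n j)) ∧
        v = dotM CA PA + dotM CB PB} : ℝ) : WithTop ℝ)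
    = sInf {v : WithTop ℝ | ∃ P : Matrix (Fin (m + k)) (Fin (n + l)) ℝ,
        (∀ i j, 0 ≤ P i j) ∧ (∀ i, ∑ j, P i j = a i) ∧ (∀ j, ∑ i, P i j = b j) ∧
        v = dotT (parC (fun i j => ((CA i j : ℝ) : WithTop ℝ))
                        (fun i j => ((CB i j : ℝ) : WithTop ℝ))) P} := by
  obtain ⟨han, hasum⟩ := ha
  obtain ⟨hbn, hbsum⟩ := hb
  have hbalB : ∑ i : Fin k, a (Fin.natAdd m i) = ∑ j : Fin l, b (Fin.natAdd n j) := by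
    rw [Fin.sum_univ_add] at hasum hbsum
    linarith
  obtain ⟨PA, hA⟩ := exists_isCoupling (fun _ => han _) (fun _ => hbn _) hbal
  obtain ⟨PB, hB⟩ := exists_isCoupling (fun _ => han _) (fun _ => hbn _) hbalB
  convert coe_sInf_parallelCosts CA CB a b ⟨_, PA, PB, hA, hB, rfl⟩ using 3 <;> ext <;>
    simp [parallelCosts, monolithicCosts, IsCoupling, and_assoc, and_left_comm, exists_and_left]
end

section
/- Strong duality for the sequentially composed OT: the minimum of ⟨C^A, P^A⟩ + ⟨C^B, P^B⟩ over feasible plans equals the supremum of Σ_i f_i a_i + Σ_j g_j b_j over f ∈ ℝ^m, g ∈ ℝ^n satisfying f_i + g_j ≤ C^A_{ik} + C^B_{kj} for all i, k, j. -/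
open BigOperators

/-
Weak duality holds one intermediate point `k` at a time: multiplying by the mass `μ` that passes
through `k` turns `f i + g j ≤ CA i k + CB k j` into `μ` times the required inequality, by pairing
every incoming unit with every outgoing one.

For the converse, a coupling `π` on routes `(i, k, j)` with endpoint marginals `a`, `b` yields a
feasible pair of plans (sum out `j`, resp. `i`) of cost `⟨CA i k + CB k j, π⟩`, so the primal value
`V` bounds this cost on the fibre of the simplex over `(a, b)`. Separating the compact convex image
of the simplex under `π ↦ (marginals, cost)` from the ray `{(a, b)} × (-∞, V - ε]` gives a linear
functional whose cost coefficient is negative; normalising it yields potentials `f`, `g` of value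
`V - ε`.
-/

open Matrix Set

theorem dotProduct_add_dotProduct_le_of_sum_eq {α β : Type*} [Fintype α] [Fintype β]
    {x : α → ℝ} {y : β → ℝ} (hx : 0 ≤ x) (hy : 0 ≤ y) (hxy : ∑ i, x i = ∑ j, y j)
    {f c : α → ℝ} {g d : β → ℝ} (h : ∀ i j, f i + g j ≤ c i + d j) :
    f ⬝ᵥ x + g ⬝ᵥ y ≤ c ⬝ᵥ x + d ⬝ᵥ y := by
  suffices 0 ≤ (c - f) ⬝ᵥ x + (d - g) ⬝ᵥ y by
    simp only [sub_dotProduct] at this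
    linarith
  have hmass : (∑ i, x i) * ((c - f) ⬝ᵥ x + (d - g) ⬝ᵥ y)
      = ∑ i, ∑ j, x i * y j * ((c i - f i) + (d j - g j)) :=
    calc (∑ i, x i) * ((c - f) ⬝ᵥ x + (d - g) ⬝ᵥ y)
        = ((c - f) ⬝ᵥ x) * (∑ j, y j) + (∑ i, x i) * ((d - g) ⬝ᵥ y) := by
          rw [mul_add, hxy, mul_comm]
      _ = _ := by
        simp only [dotProduct, Finset.sum_mul_sum, ← Finset.sum_add_distrib, Pi.sub_apply]
        exact Finset.sum_congr rfl fun i _ => Finset.sum_congr rfl fun j _ => by ring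
  rcases (Finset.sum_nonneg fun i _ => hx i).eq_or_lt with hzero | hpos
  · have hx0 : x = 0 := funext fun i =>
      (Finset.sum_eq_zero_iff_of_nonneg fun i _ => hx i).1 hzero.symm i (Finset.mem_univ i)
    have hy0 : y = 0 := funext fun j =>
      (Finset.sum_eq_zero_iff_of_nonneg fun j _ => hy j).1 (hxy ▸ hzero.symm) j (Finset.mem_univ j)
    simp [hx0, hy0]
  · refine nonneg_of_mul_nonneg_right ?_ hpos
    rw [hmass]
    exact Finset.sum_nonneg fun i _ => Finset.sum_nonneg fun j _ =>
      mul_nonneg (mul_nonneg (hx i) (hy j)) (by linarith [h i j])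

theorem exists_dual_certificate_of_le_dotProduct {ι E : Type*} [Fintype ι] [DecidableEq ι]
    [NormedAddCommGroup E] [NormedSpace ℝ E] (A : (ι → ℝ) →L[ℝ] E) (c : ι → ℝ) {z : E}
    {V ε : ℝ} (hε : 0 < ε) (hfeas : ∃ π ∈ stdSimplex ℝ ι, A π = z)
    (hV : ∀ π ∈ stdSimplex ℝ ι, A π = z → V ≤ c ⬝ᵥ π) :
    ∃ (ψ : StrongDual ℝ E) (κ : ℝ), (∀ p, ψ (A (Pi.single p 1)) + κ ≤ c p) ∧ ψ z + κ = V - ε := by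
  have hΦ : IsLinearMap ℝ fun π : ι → ℝ => (A π, c ⬝ᵥ π) :=
    ⟨fun π σ => by simp [dotProduct_add], fun r π => by simp⟩
  have hdisj : Disjoint ((fun π => (A π, c ⬝ᵥ π)) '' stdSimplex ℝ ι) ({z} ×ˢ Iic (V - ε)) := by
    refine Set.disjoint_left.2 ?_
    rintro _ ⟨π, hπ, rfl⟩ ⟨hAπ, hcπ⟩
    linarith [hV π hπ hAπ, show c ⬝ᵥ π ≤ V - ε from hcπ]
  obtain ⟨φ, u, v, hφK, huv, hφT⟩ := geometric_hahn_banach_compact_closed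
    ((convex_stdSimplex ℝ ι).is_linear_image hΦ)
    ((isCompact_stdSimplex ℝ ι).image (by fun_prop))
    ((convex_singleton z).prod (convex_Iic _)) (isClosed_singleton.prod isClosed_Iic) hdisj
  set ψ₀ := φ.comp (ContinuousLinearMap.inl ℝ E ℝ)
  set β := φ (0, 1)
  have hφ : ∀ x r, φ (x, r) = ψ₀ x + β * r := fun x r => by
    have : ((x, r) : E × ℝ) = (x, 0) + r • (0, 1) := by simp
    rw [this, map_add, map_smul, smul_eq_mul, mul_comm]
    rfl
  have hlow : ∀ π ∈ stdSimplex ℝ ι, ψ₀ (A π) + β * (c ⬝ᵥ π) < ψ₀ z + β * (V - ε) := by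
    intro π hπ
    have hK := hφK _ ⟨π, hπ, rfl⟩
    have hT := hφT (z, V - ε) ⟨rfl, le_refl (V - ε)⟩
    rw [hφ] at hK hT
    linarith
  have hβ : β < 0 := by
    obtain ⟨π, hπ, hAπ⟩ := hfeas
    have := hlow π hπ
    rw [hAπ] at this
    nlinarith [hV π hπ hAπ]
  refine ⟨(-β)⁻¹ • ψ₀, V - ε - ((-β)⁻¹ • ψ₀) z, fun p => ?_, by ring⟩
  have hp := hlow _ (single_mem_stdSimplex ℝ p)
  rw [dotProduct_single, mul_one] at hp
  change (-β)⁻¹ * ψ₀ _ + (V - ε - (-β)⁻¹ * ψ₀ z) ≤ c p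
  have : (-β)⁻¹ * (ψ₀ (A (Pi.single p 1)) - ψ₀ z) ≤ c p - (V - ε) := by
    rw [inv_mul_le_iff₀ (by linarith)]
    linarith
  linarith [mul_sub (-β)⁻¹ (ψ₀ (A (Pi.single p 1))) (ψ₀ z)]

theorem ContinuousLinearMap.apply_prod_eq_sum {α β : Type*} [Fintype α] [Fintype β]
    [DecidableEq α] [DecidableEq β] (ψ : StrongDual ℝ ((α → ℝ) × (β → ℝ))) (x : α → ℝ) (y : β → ℝ) :
    ψ (x, y) = ∑ i, x i * ψ (Pi.single i 1, 0) + ∑ j, y j * ψ (0, Pi.single j 1) := by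
  have hx : ψ (x, 0) = ∑ i, x i * ψ (Pi.single i 1, 0) := by
    change (ψ.comp (ContinuousLinearMap.inl ℝ _ _)) x = _
    conv_lhs => rw [pi_eq_sum_univ' x]
    simp
  have hy : ψ (0, y) = ∑ j, y j * ψ (0, Pi.single j 1) := by
    change (ψ.comp (ContinuousLinearMap.inr ℝ _ _)) y = _
    conv_lhs => rw [pi_eq_sum_univ' y]
    simp
  rw [← hx, ← hy, ← map_add, Prod.mk_add_mk, add_zero, zero_add]

namespace SeqOT

variable {m l n : ℕ}

theorem sum_mul_add_sum_mul_le_dotM_add_dotM {CA : Matrix (Fin m) (Fin l) ℝ}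
    {CB : Matrix (Fin l) (Fin n) ℝ} {PA : Matrix (Fin m) (Fin l) ℝ} {PB : Matrix (Fin l) (Fin n) ℝ}
    (hPA : ∀ i k, 0 ≤ PA i k) (hPB : ∀ k j, 0 ≤ PB k j) (hM : ∀ k, ∑ i, PA i k = ∑ j, PB k j)
    {f : Fin m → ℝ} {g : Fin n → ℝ} (hfg : ∀ i k j, f i + g j ≤ CA i k + CB k j) :
    ∑ i, f i * ∑ k, PA i k + ∑ j, g j * ∑ k, PB k j ≤ dotM CA PA + dotM CB PB := by
  calc ∑ i, f i * ∑ k, PA i k + ∑ j, g j * ∑ k, PB k j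
      = ∑ k, (f ⬝ᵥ (fun i => PA i k) + g ⬝ᵥ PB k) := by
        simp only [dotProduct, Finset.mul_sum, Finset.sum_add_distrib]
        congr 1 <;> exact Finset.sum_comm
    _ ≤ ∑ k, ((fun i => CA i k) ⬝ᵥ (fun i => PA i k) + CB k ⬝ᵥ PB k) :=
        Finset.sum_le_sum fun k _ => dotProduct_add_dotProduct_le_of_sum_eq
          (fun i => hPA i k) (hPB k) (hM k) fun i j => hfg i k j
    _ = dotM CA PA + dotM CB PB := by
        simp only [dotM, dotProduct, Finset.sum_add_distrib]
        rw [Finset.sum_comm (γ := Fin l)]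

def firstLeg (π : Fin m × Fin l × Fin n → ℝ) : Matrix (Fin m) (Fin l) ℝ :=
  Matrix.of fun i k => ∑ j, π (i, k, j)

def secondLeg (π : Fin m × Fin l × Fin n → ℝ) : Matrix (Fin l) (Fin n) ℝ :=
  Matrix.of fun k j => ∑ i, π (i, k, j)

def routeCost (CA : Matrix (Fin m) (Fin l) ℝ) (CB : Matrix (Fin l) (Fin n) ℝ) :
    Fin m × Fin l × Fin n → ℝ :=
  fun p => CA p.1 p.2.1 + CB p.2.1 p.2.2

noncomputable def endpointMarginals :
    (Fin m × Fin l × Fin n → ℝ) →L[ℝ] (Fin m → ℝ) × (Fin n → ℝ) :=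
  LinearMap.toContinuousLinearMap
    { toFun π := (fun i => ∑ k, firstLeg π i k, fun j => ∑ k, secondLeg π k j)
      map_add' π σ := by ext <;> simp [firstLeg, secondLeg, Finset.sum_add_distrib]
      map_smul' r π := by ext <;> simp [firstLeg, secondLeg, Finset.mul_sum] }

theorem dotM_firstLeg_add_dotM_secondLeg (CA : Matrix (Fin m) (Fin l) ℝ)
    (CB : Matrix (Fin l) (Fin n) ℝ) (π : Fin m × Fin l × Fin n → ℝ) :
    dotM CA (firstLeg π) + dotM CB (secondLeg π) = routeCost CA CB ⬝ᵥ π := by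
  simp only [dotM, firstLeg, secondLeg, routeCost, dotProduct, Matrix.of_apply,
    Fintype.sum_prod_type, add_mul, Finset.sum_add_distrib, Finset.mul_sum]
  congr 1
  rw [Finset.sum_comm (γ := Fin m) (f := fun i k => ∑ j, CB k j * π (i, k, j))]
  exact Finset.sum_congr rfl fun k _ => Finset.sum_comm

theorem sum_firstLeg_eq_sum_secondLeg (π : Fin m × Fin l × Fin n → ℝ) (k : Fin l) :
    ∑ i, firstLeg π i k = ∑ j, secondLeg π k j := by
  simp only [firstLeg, secondLeg, Matrix.of_apply]
  exact Finset.sum_comm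

theorem endpointMarginals_single (p : Fin m × Fin l × Fin n) :
    endpointMarginals (Pi.single p 1) = (Pi.single p.1 1, Pi.single p.2.2 1) := by
  obtain ⟨i, k, j⟩ := p
  ext i' <;> simp [endpointMarginals, firstLeg, secondLeg, Pi.single_apply, ite_and]

theorem exists_mem_stdSimplex_endpointMarginals_eq (k : Fin l) {a : Fin m → ℝ} {b : Fin n → ℝ}
    (ha : a ∈ stdSimplex ℝ (Fin m)) (hb : b ∈ stdSimplex ℝ (Fin n)) :
    ∃ π ∈ stdSimplex ℝ (Fin m × Fin l × Fin n), endpointMarginals π = (a, b) := by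
  refine ⟨fun p => if p.2.1 = k then a p.1 * b p.2.2 else 0, ⟨fun p => ?_, ?_⟩, ?_⟩
  · dsimp only
    split_ifs
    exacts [mul_nonneg (ha.1 _) (hb.1 _), le_rfl]
  · simp [Fintype.sum_prod_type, ← Finset.mul_sum, ha.2, hb.2]
  · ext <;> simp [endpointMarginals, firstLeg, secondLeg, ← Finset.mul_sum, ← Finset.sum_mul,
      ha.2, hb.2]

theorem exists_potentials_of_le_routeCost (CA : Matrix (Fin m) (Fin l) ℝ)
    (CB : Matrix (Fin l) (Fin n) ℝ) {a : Fin m → ℝ} {b : Fin n → ℝ} (ha : ∑ i, a i = 1)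
    {V ε : ℝ} (hε : 0 < ε)
    (hfeas : ∃ π ∈ stdSimplex ℝ (Fin m × Fin l × Fin n), endpointMarginals π = (a, b))
    (hV : ∀ π ∈ stdSimplex ℝ (Fin m × Fin l × Fin n), endpointMarginals π = (a, b) →
      V ≤ routeCost CA CB ⬝ᵥ π) :
    ∃ (f : Fin m → ℝ) (g : Fin n → ℝ), (∀ i k j, f i + g j ≤ CA i k + CB k j) ∧
      ∑ i, f i * a i + ∑ j, g j * b j = V - ε := by
  obtain ⟨ψ, κ, hcert, hval⟩ := exists_dual_certificate_of_le_dotProduct _ _ hε hfeas hV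
  refine ⟨fun i => ψ (Pi.single i 1, 0) + κ, fun j => ψ (0, Pi.single j 1), fun i k j => ?_, ?_⟩
  · have := hcert (i, k, j)
    rw [endpointMarginals_single, ψ.apply_prod_eq_sum] at this
    simpa [Pi.single_apply, routeCost, add_right_comm] using this
  · rw [← hval, ψ.apply_prod_eq_sum]
    simp only [add_mul, Finset.sum_add_distrib, ← Finset.mul_sum, ha, mul_one, mul_comm (ψ _)]
    ring

def primalCosts (CA : Matrix (Fin m) (Fin l) ℝ) (CB : Matrix (Fin l) (Fin n) ℝ)
    (a : Fin m → ℝ) (b : Fin n → ℝ) : Set ℝ :=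
  {v : ℝ | ∃ (PA : Matrix (Fin m) (Fin l) ℝ) (PB : Matrix (Fin l) (Fin n) ℝ),
    (∀ i k, 0 ≤ PA i k) ∧ (∀ k j, 0 ≤ PB k j) ∧
    (∀ i, ∑ k, PA i k = a i) ∧ (∀ j, ∑ k, PB k j = b j) ∧
    (∀ k, ∑ i, PA i k = ∑ j, PB k j) ∧
    v = dotM CA PA + dotM CB PB}

def dualValues (CA : Matrix (Fin m) (Fin l) ℝ) (CB : Matrix (Fin l) (Fin n) ℝ)
    (a : Fin m → ℝ) (b : Fin n → ℝ) : Set ℝ :=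
  {v : ℝ | ∃ (f : Fin m → ℝ) (g : Fin n → ℝ),
    (∀ (i : Fin m) (k : Fin l) (j : Fin n), f i + g j ≤ CA i k + CB k j) ∧
    v = ∑ i, f i * a i + ∑ j, g j * b j}

variable {CA : Matrix (Fin m) (Fin l) ℝ} {CB : Matrix (Fin l) (Fin n) ℝ}
  {a : Fin m → ℝ} {b : Fin n → ℝ}

theorem dualValue_le_primalCost {d p : ℝ} (hd : d ∈ dualValues CA CB a b)
    (hp : p ∈ primalCosts CA CB a b) : d ≤ p := by
  obtain ⟨f, g, hfg, rfl⟩ := hd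
  obtain ⟨PA, PB, hPA, hPB, hA, hB, hM, rfl⟩ := hp
  simpa only [hA, hB] using sum_mul_add_sum_mul_le_dotM_add_dotM hPA hPB hM hfg

theorem dualValues_nonempty : (dualValues CA CB a b).Nonempty :=
  ⟨_, fun i => ⨅ p : Fin l × Fin n, CA i p.1 + CB p.1 p.2, 0,
    fun i k j => by simpa using ciInf_le (Set.finite_range _).bddBelow (k, j), rfl⟩

theorem routeCost_dotProduct_mem_primalCosts {π : Fin m × Fin l × Fin n → ℝ}
    (hπ : π ∈ stdSimplex ℝ (Fin m × Fin l × Fin n)) (hmarg : endpointMarginals π = (a, b)) :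
    routeCost CA CB ⬝ᵥ π ∈ primalCosts CA CB a b :=
  ⟨firstLeg π, secondLeg π, fun i k => Fintype.sum_nonneg fun j => hπ.1 (i, k, j),
    fun k j => Fintype.sum_nonneg fun i => hπ.1 (i, k, j), congr_fun (congr_arg Prod.fst hmarg),
    congr_fun (congr_arg Prod.snd hmarg), sum_firstLeg_eq_sum_secondLeg π,
    (dotM_firstLeg_add_dotM_secondLeg CA CB π).symm⟩

end SeqOT

open SeqOT in
theorem seqOT_strong_duality_general {m l n : ℕ} (hl : 1 ≤ l)
    (CA : Matrix (Fin m) (Fin l) ℝ) (CB : Matrix (Fin l) (Fin n) ℝ)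
    (a : Fin m → ℝ) (b : Fin n → ℝ)
    (ha : (∀ i, 0 ≤ a i) ∧ ∑ i, a i = 1) (hb : (∀ j, 0 ≤ b j) ∧ ∑ j, b j = 1) :
    sInf {v : ℝ | ∃ (PA : Matrix (Fin m) (Fin l) ℝ) (PB : Matrix (Fin l) (Fin n) ℝ),
        (∀ i k, 0 ≤ PA i k) ∧ (∀ k j, 0 ≤ PB k j) ∧
        (∀ i, ∑ k, PA i k = a i) ∧ (∀ j, ∑ k, PB k j = b j) ∧
        (∀ k, ∑ i, PA i k = ∑ j, PB k j) ∧
        v = dotM CA PA + dotM CB PB}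
    = sSup {v : ℝ | ∃ (f : Fin m → ℝ) (g : Fin n → ℝ),
        (∀ (i : Fin m) (k : Fin l) (j : Fin n), f i + g j ≤ CA i k + CB k j) ∧
        v = ∑ i, f i * a i + ∑ j, g j * b j} := by
  change sInf (primalCosts CA CB a b) = sSup (dualValues CA CB a b)
  obtain ⟨π₀, hπ₀, hπ₀marg⟩ := exists_mem_stdSimplex_endpointMarginals_eq ⟨0, hl⟩ ha hb
  have hP : (primalCosts CA CB a b).Nonempty :=
    ⟨_, routeCost_dotProduct_mem_primalCosts hπ₀ hπ₀marg⟩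
  have hD : (dualValues CA CB a b).Nonempty := dualValues_nonempty
  refine le_antisymm (le_of_forall_sub_le fun ε hε => ?_)
    (csSup_le hD fun d hd => le_csInf hP fun p hp => dualValue_le_primalCost hd hp)
  obtain ⟨f, g, hfg, hval⟩ := exists_potentials_of_le_routeCost CA CB ha.2 hε ⟨π₀, hπ₀, hπ₀marg⟩
    fun π hπ hmarg => csInf_le ⟨_, fun p hp => dualValue_le_primalCost hD.some_mem hp⟩
      (routeCost_dotProduct_mem_primalCosts hπ hmarg)
  exact le_csSup ⟨_, fun d hd => dualValue_le_primalCost hd hP.some_mem⟩ ⟨f, g, hfg, hval.symm⟩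

theorem seqOT_strong_duality {m l n : ℕ} (hm : 1 ≤ m) (hn : 1 ≤ n) (hl : 1 ≤ l)
    (CA : Matrix (Fin m) (Fin l) ℝ) (CB : Matrix (Fin l) (Fin n) ℝ)
    (a : Fin m → ℝ) (b : Fin n → ℝ)
    (ha : (∀ i, 0 ≤ a i) ∧ ∑ i, a i = 1) (hb : (∀ j, 0 ≤ b j) ∧ ∑ j, b j = 1) :
    sInf {v : ℝ | ∃ (PA : Matrix (Fin m) (Fin l) ℝ) (PB : Matrix (Fin l) (Fin n) ℝ),
        (∀ i k, 0 ≤ PA i k) ∧ (∀ k j, 0 ≤ PB k j) ∧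
        (∀ i, ∑ k, PA i k = a i) ∧ (∀ j, ∑ k, PB k j = b j) ∧
        (∀ k, ∑ i, PA i k = ∑ j, PB k j) ∧
        v = dotM CA PA + dotM CB PB}
    = sSup {v : ℝ | ∃ (f : Fin m → ℝ) (g : Fin n → ℝ),
        (∀ (i : Fin m) (k : Fin l) (j : Fin n), f i + g j ≤ CA i k + CB k j) ∧
        v = ∑ i, f i * a i + ∑ j, g j * b j} :=
  seqOT_strong_duality_general hl CA CB a b ha hb
end

section
/- Strong duality for the parallelly composed OT: assuming Σ_{i=1}^m a_i = Σ_{j=1}^n b_j, the minimum of ⟨C^A, P^A⟩ + ⟨C^B, P^B⟩ over feasible plans equals the supremum of Σ_{i=1}^{m+k} f_i a_i + Σ_{j=1}^{n+l} g_j b_j over f ∈ ℝ^(m+k), g ∈ ℝ^(n+l) satisfying f_i + g_j ≤ C^A_{ij} for i ∈ [m], j ∈ [n] and f_{m+i} + g_{n+j} ≤ C^B_{ij} for i ∈ [k], j ∈ [l]. -/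
open Function Matrix

section ConicCaratheodory

variable {𝕜 E ι : Type*} [Field 𝕜] [LinearOrder 𝕜] [IsStrictOrderedRing 𝕜]
  [AddCommGroup E] [Module 𝕜 E] [Fintype ι]

lemma exists_pos_dependence_of_not_linearIndepOn {g : ι → E} {s : Set ι}
    (hdep : ¬LinearIndepOn 𝕜 g s) :
    ∃ c : ι → 𝕜, support c ⊆ s ∧ ∑ i, c i • g i = 0 ∧ ∃ i, 0 < c i := by
  classical
  rw [← s.coe_toFinset, not_linearIndepOn_finset_iff] at hdep
  obtain ⟨f, hf, i, hi, hfi⟩ := hdep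
  have hsum : ∑ j, s.indicator f j • g j = 0 := by
    simp_rw [← hf, Set.indicator_apply, ite_smul, zero_smul]
    rw [Finset.sum_ite, Finset.sum_const_zero, add_zero]
    congr 1; ext; simp
  have hfi' : s.indicator f i = f i := Set.indicator_of_mem (Set.mem_toFinset.1 hi) f
  rcases hfi.lt_or_gt with hneg | hpos
  · refine ⟨-s.indicator f, by rw [support_neg]; exact Set.support_indicator_subset, ?_, i, ?_⟩
    · simp only [Pi.neg_apply, neg_smul, Finset.sum_neg_distrib, hsum, neg_zero]
    · simpa [hfi'] using hneg
  · exact ⟨_, Set.support_indicator_subset, hsum, i, hfi' ▸ hpos⟩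

lemma exists_nonneg_support_ssubset_of_not_linearIndepOn {g : ι → E} {w : ι → 𝕜}
    (hw : 0 ≤ w) (hdep : ¬LinearIndepOn 𝕜 g (support w)) :
    ∃ μ : ι → 𝕜, 0 ≤ μ ∧ support μ ⊂ support w ∧ ∑ i, μ i • g i = ∑ i, w i • g i := by
  classical
  obtain ⟨c, hc_supp, hc_sum, i₁, hi₁⟩ := exists_pos_dependence_of_not_linearIndepOn hdep
  -- move along `-c` until the first coordinate of `w` vanishes
  obtain ⟨i₀, hi₀, hi₀_min⟩ := (Finset.univ.filter (0 < c ·)).exists_min_image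
    (fun i => w i / c i) ⟨i₁, by simpa using hi₁⟩
  rw [Finset.mem_filter] at hi₀
  set t := w i₀ / c i₀
  have ht : 0 ≤ t := div_nonneg (hw i₀) hi₀.2.le
  refine ⟨w - t • c, fun i => ?_, ?_, ?_⟩
  · rcases le_or_gt (c i) 0 with hci | hci
    · simp only [Pi.zero_apply, Pi.sub_apply, Pi.smul_apply, smul_eq_mul, sub_nonneg]
      exact (mul_nonpos_of_nonneg_of_nonpos ht hci).trans (hw i)
    · have := hi₀_min i (by simpa using hci)
      rw [le_div_iff₀ hci] at this
      simpa [sub_nonneg] using this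
  · have hsub : support (w - t • c) ⊆ support w :=
      (support_sub _ _).trans
        (Set.union_subset le_rfl ((support_smul_subset_right _ _).trans hc_supp))
    refine (Set.ssubset_iff_of_subset hsub).2 ⟨i₀, hc_supp hi₀.2.ne', ?_⟩
    simp [t, div_mul_cancel₀ _ hi₀.2.ne']
  · simp only [Pi.sub_apply, Pi.smul_apply, sub_smul, smul_assoc, Finset.sum_sub_distrib,
      ← Finset.smul_sum, hc_sum, smul_zero, sub_zero]

theorem exists_nonneg_linearIndepOn_sum_smul_eq (g : ι → E) {w : ι → 𝕜} (hw : 0 ≤ w) :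
    ∃ μ : ι → 𝕜, 0 ≤ μ ∧ LinearIndepOn 𝕜 g (support μ) ∧ ∑ i, μ i • g i = ∑ i, w i • g i := by
  obtain ⟨μ, ⟨hμ, hμ_sum⟩, hμ_min⟩ := (measure fun μ : ι → 𝕜 => (support μ).ncard).wf.has_min
    {μ | 0 ≤ μ ∧ ∑ i, μ i • g i = ∑ i, w i • g i} ⟨w, hw, rfl⟩
  refine ⟨μ, hμ, by_contra fun hdep => ?_, hμ_sum⟩
  obtain ⟨ν, hν, hνμ, hν_sum⟩ := exists_nonneg_support_ssubset_of_not_linearIndepOn hμ hdep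
  exact hμ_min ν ⟨hν, hν_sum.trans hμ_sum⟩ (Set.ncard_lt_ncard hνμ (Set.toFinite _))

end ConicCaratheodory

section Farkas

variable {ι E : Type*} [Fintype ι] [AddCommGroup E] [Module ℝ E]

lemma mem_positive_map_linearCombination (g : ι → E) (i : ι) :
    g i ∈ (PointedCone.positive ℝ (ι → ℝ)).map (Fintype.linearCombination ℝ g) := by
  classical
  exact ⟨Pi.single i 1, (PointedCone.mem_positive ℝ _).2 (Pi.single_nonneg.2 zero_le_one),
    by simp⟩

variable [TopologicalSpace E] [IsTopologicalAddGroup E] [ContinuousSMul ℝ E] [T2Space E]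

theorem isClosed_positive_map_linearCombination (g : ι → E) :
    IsClosed ((PointedCone.positive ℝ (ι → ℝ)).map (Fintype.linearCombination ℝ g) : Set E) := by
  classical
  set K := (PointedCone.positive ℝ (ι → ℝ)).map (Fintype.linearCombination ℝ g)
  -- by conic Carathéodory, `K` is the union of the cones spanned by the independent subfamilies,
  -- each the image of a closed orthant under a closed embedding
  have hK : (K : Set E) = ⋃ t : {t : Finset ι // LinearIndepOn ℝ g t},
      Fintype.linearCombination ℝ (fun i : t.1 => g i) '' Set.Ici 0 := by
    refine Set.Subset.antisymm ?_ (Set.iUnion_subset fun t => ?_)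
    · rintro _ ⟨x, hx, rfl⟩
      obtain ⟨μ, hμ, hμ_ind, hμ_sum⟩ :=
        exists_nonneg_linearIndepOn_sum_smul_eq g ((PointedCone.mem_positive ℝ _).1 hx)
      refine Set.mem_iUnion.2 ⟨⟨Finset.univ.filter (μ · ≠ 0), by simpa [support] using hμ_ind⟩,
        fun i => μ i, fun i => hμ i, ?_⟩
      simp only [Fintype.linearCombination_apply, Finset.sum_coe_sort _ (fun i => μ i • g i)]
      rw [Finset.sum_filter_of_ne fun i _ h => left_ne_zero_of_smul h, hμ_sum]
      rfl
    · rintro _ ⟨x, hx, rfl⟩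
      rw [Fintype.linearCombination_apply]
      exact Submodule.sum_mem _ fun i _ =>
        K.smul_mem (hx i) (mem_positive_map_linearCombination g i)
  rw [hK]
  exact isClosed_iUnion_of_finite fun t =>
    (LinearMap.isClosedEmbedding_of_injective (LinearMap.ker_eq_bot.2
      t.2.fintypeLinearCombination_injective)).isClosedMap _ isClosed_Ici

/-- **Farkas' lemma** -/
theorem exists_strongDual_separating_of_forall_ne [LocallyConvexSpace ℝ E] (g : ι → E) {v : E}
    (hv : ∀ x : ι → ℝ, 0 ≤ x → ∑ i, x i • g i ≠ v) :
    ∃ f : StrongDual ℝ E, (∀ i, 0 ≤ f (g i)) ∧ f v < 0 := by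
  let C : ProperCone ℝ E := ⟨_, isClosed_positive_map_linearCombination g⟩
  obtain ⟨f, hf, hfv⟩ := C.hyperplane_separation_point (x₀ := v) <| by
    rintro ⟨x, hx, hxv⟩
    exact hv x ((PointedCone.mem_positive ℝ _).1 hx)
      (by simpa [Fintype.linearCombination_apply] using hxv)
  exact ⟨f, fun i => hf _ (mem_positive_map_linearCombination g i), hfv⟩

end Farkas

section LinearProgramming

variable {ι κ : Type*} [Fintype ι] [Fintype κ]

theorem Matrix.exists_mulVec_nonneg_dotProduct_neg (A : Matrix ι κ ℝ) {d : κ → ℝ}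
    (hd : ∀ x, 0 ≤ x → x ᵥ* A ≠ d) : ∃ w, 0 ≤ A *ᵥ w ∧ d ⬝ᵥ w < 0 := by
  classical
  obtain ⟨f, hf, hfd⟩ := exists_strongDual_separating_of_forall_ne (fun i => A i) (v := d)
    fun x hx h => hd x hx (by rwa [vecMul_eq_sum])
  set w : κ → ℝ := fun j => f fun j' => if j = j' then 1 else 0
  have hfw (u : κ → ℝ) : f u = u ⬝ᵥ w := LinearMap.pi_apply_eq_sum_univ (f : (κ → ℝ) →ₗ[ℝ] ℝ) u
  exact ⟨w, fun i => by simpa [hfw, mulVec, dotProduct_comm] using hf i, by rwa [← hfw]⟩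

theorem dotProduct_le_dotProduct_of_vecMul_eq {A : Matrix ι κ ℝ} {c : ι → ℝ} {d : κ → ℝ}
    {x : ι → ℝ} {y : κ → ℝ} (hx : 0 ≤ x) (hxA : x ᵥ* A = d) (hy : A *ᵥ y ≤ c) :
    d ⬝ᵥ y ≤ x ⬝ᵥ c := by
  rw [← hxA, ← dotProduct_mulVec]
  exact dotProduct_le_dotProduct_of_nonneg_left hy hx

theorem exists_mulVec_le_lt_dotProduct {A : Matrix ι κ ℝ} {c : ι → ℝ} {d : κ → ℝ} {t : ℝ}
    (hP : ∃ x, 0 ≤ x ∧ x ᵥ* A = d) (ht : ∀ x, 0 ≤ x → x ᵥ* A = d → t < x ⬝ᵥ c) :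
    ∃ y, A *ᵥ y ≤ c ∧ t < d ⬝ᵥ y := by
  obtain ⟨x₀, hx₀, hx₀A⟩ := hP
  -- `M` encodes the system `x ᵥ* A = d, x ⬝ᵥ c + s = t`, which has no solution with `x, s ≥ 0`
  set M : Matrix (ι ⊕ Unit) (κ ⊕ Unit) ℝ := fromBlocks A (replicateCol Unit c) 0 1
  have hvecMul (x : ι ⊕ Unit → ℝ) :
      x ᵥ* M = Sum.elim (x ∘ Sum.inl ᵥ* A) fun _ => x ∘ Sum.inl ⬝ᵥ c + x (Sum.inr ()) := by
    ext (j | _) <;> simp [M, vecMul, dotProduct, replicateCol_apply, mul_comm]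
  have hmulVec (w : κ ⊕ Unit → ℝ) :
      M *ᵥ w = Sum.elim (A *ᵥ (w ∘ Sum.inl) + w (Sum.inr ()) • c) fun _ => w (Sum.inr ()) := by
    ext (j | _) <;> simp [M, mulVec, dotProduct, replicateCol_apply, mul_comm]
  obtain ⟨w, hw, hwd⟩ := M.exists_mulVec_nonneg_dotProduct_neg (d := Sum.elim d fun _ => t) <| by
    intro x hx hxA
    rw [hvecMul] at hxA
    have hlt := ht (x ∘ Sum.inl) (fun i => hx _) (congrArg (· ∘ Sum.inl) hxA)
    have heq : x ∘ Sum.inl ⬝ᵥ c + x (Sum.inr ()) = t := congrFun hxA (Sum.inr ())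
    linarith [show 0 ≤ x (Sum.inr ()) from hx _]
  set u := w ∘ Sum.inl
  set s := w (Sum.inr ())
  rw [hmulVec] at hw
  have hs : 0 ≤ s := hw (Sum.inr ())
  have hu : 0 ≤ A *ᵥ u + s • c := fun i => hw (Sum.inl i)
  have hud : d ⬝ᵥ u + t * s < 0 := by simpa [u, s, dotProduct, Fintype.sum_sum_type] using hwd
  rcases hs.eq_or_lt with hs0 | hspos
  · have : 0 ≤ d ⬝ᵥ u := by
      rw [← hx₀A, ← dotProduct_mulVec]
      exact dotProduct_nonneg_of_nonneg hx₀ (by simpa [← hs0] using hu)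
    rw [← hs0] at hud
    linarith
  · refine ⟨-s⁻¹ • u, fun i => ?_, ?_⟩
    · have := hu i
      simp only [mulVec_smul, Pi.smul_apply, Pi.add_apply, Pi.zero_apply, smul_eq_mul] at this ⊢
      field_simp
      linarith
    · rw [dotProduct_smul, smul_eq_mul]
      field_simp
      linarith

theorem exists_isGLB_primal_isLUB_dual {A : Matrix ι κ ℝ} {c : ι → ℝ} {d : κ → ℝ}
    (hP : ∃ x, 0 ≤ x ∧ x ᵥ* A = d) (hD : ∃ y, A *ᵥ y ≤ c) :
    ∃ v, IsGLB {v | ∃ x, 0 ≤ x ∧ x ᵥ* A = d ∧ v = x ⬝ᵥ c} v ∧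
      IsLUB {v | ∃ y, A *ᵥ y ≤ c ∧ v = d ⬝ᵥ y} v := by
  obtain ⟨x₀, hx₀, hx₀A⟩ := hP
  obtain ⟨y₀, hy₀⟩ := hD
  have hglb : IsGLB {v | ∃ x, 0 ≤ x ∧ x ᵥ* A = d ∧ v = x ⬝ᵥ c} _ :=
    isGLB_csInf ⟨_, x₀, hx₀, hx₀A, rfl⟩ ⟨d ⬝ᵥ y₀, by
      rintro _ ⟨x, hx, hxA, rfl⟩; exact dotProduct_le_dotProduct_of_vecMul_eq hx hxA hy₀⟩
  refine ⟨_, hglb, ?_, fun b hb => not_lt.1 fun hlt => ?_⟩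
  · rintro _ ⟨y, hy, rfl⟩
    exact hglb.2 fun _ ⟨x, hx, hxA, hv⟩ => hv ▸ dotProduct_le_dotProduct_of_vecMul_eq hx hxA hy
  · obtain ⟨y, hy, hby⟩ := exists_mulVec_le_lt_dotProduct ⟨x₀, hx₀, hx₀A⟩
      fun x hx hxA => hlt.trans_le (hglb.1 ⟨x, hx, hxA, rfl⟩)
    exact (hb ⟨y, hy, rfl⟩).not_gt hby

end LinearProgramming

section Kantorovich

variable {α β : Type*} [Fintype α] [Fintype β]

def transportPlans (r : α → ℝ) (c : β → ℝ) : Set (Matrix α β ℝ) :=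
  {P | (∀ i j, 0 ≤ P i j) ∧ (∀ i, ∑ j, P i j = r i) ∧ ∀ j, ∑ i, P i j = c j}

def transportCosts (C : Matrix α β ℝ) (r : α → ℝ) (c : β → ℝ) : Set ℝ :=
  {v | ∃ P ∈ transportPlans r c, v = ∑ i, ∑ j, C i j * P i j}

def potentialValues (C : Matrix α β ℝ) (r : α → ℝ) (c : β → ℝ) : Set ℝ :=
  {v | ∃ (f : α → ℝ) (g : β → ℝ), (∀ i j, f i + g j ≤ C i j) ∧
    v = ∑ i, f i * r i + ∑ j, g j * c j}

/-- The constraint matrix of the transport problem as a linear program in standard form. -/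
def marginalMatrix (α β : Type*) [DecidableEq α] [DecidableEq β] : Matrix (α × β) (α ⊕ β) ℝ :=
  Matrix.of fun p => Sum.elim (Pi.single p.1 1) (Pi.single p.2 1)

/-- When the total mass vanishes, so do `r` and `c`, and `x / 0 = 0` gives the zero plan. -/
lemma div_sum_mem_transportPlans {r : α → ℝ} {c : β → ℝ} (hr : 0 ≤ r) (hc : 0 ≤ c)
    (hrc : ∑ i, r i = ∑ j, c j) :
    (fun i j => r i * c j / ∑ i, r i) ∈ transportPlans r c := by
  have hs : 0 ≤ ∑ i, r i := Finset.sum_nonneg fun i _ => hr i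
  refine ⟨fun i j => div_nonneg (mul_nonneg (hr i) (hc j)) hs, fun i => ?_, fun j => ?_⟩
  · rw [← Finset.sum_div, ← Finset.mul_sum, ← hrc]
    rcases hs.eq_or_lt with hs0 | hspos
    · simp [(Finset.sum_eq_zero_iff_of_nonneg fun i _ => hr i).1 hs0.symm i]
    · exact mul_div_cancel_right₀ _ hspos.ne'
  · rw [← Finset.sum_div, ← Finset.sum_mul]
    rcases hs.eq_or_lt with hs0 | hspos
    · simp [(Finset.sum_eq_zero_iff_of_nonneg fun j _ => hc j).1 (hrc ▸ hs0.symm) j]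
    · exact mul_div_cancel_left₀ _ hspos.ne'

section MarginalMatrix

variable [DecidableEq α] [DecidableEq β]

lemma vecMul_marginalMatrix (x : α × β → ℝ) :
    x ᵥ* marginalMatrix α β = Sum.elim (fun i => ∑ j, x (i, j)) fun j => ∑ i, x (i, j) := by
  ext (i | j) <;> simp only [marginalMatrix, vecMul, dotProduct, Fintype.sum_prod_type, of_apply,
    Sum.elim_inl, Sum.elim_inr, Pi.single_apply, mul_ite, mul_one, mul_zero]
  · rw [Finset.sum_comm]; simp
  · simp

lemma marginalMatrix_mulVec (y : α ⊕ β → ℝ) :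
    marginalMatrix α β *ᵥ y = fun p => y (Sum.inl p.1) + y (Sum.inr p.2) := by
  ext p; simp [marginalMatrix, mulVec, dotProduct, Fintype.sum_sum_type, Pi.single_apply]

lemma transportCosts_eq (C : Matrix α β ℝ) (r : α → ℝ) (c : β → ℝ) :
    transportCosts C r c = {v | ∃ x, 0 ≤ x ∧ x ᵥ* marginalMatrix α β = Sum.elim r c ∧
      v = x ⬝ᵥ fun p => C p.1 p.2} := by
  ext v
  constructor
  · rintro ⟨P, ⟨hP, hrow, hcol⟩, rfl⟩
    refine ⟨fun p => P p.1 p.2, fun p => hP _ _, ?_, ?_⟩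
    · rw [vecMul_marginalMatrix]
      ext (i | j) <;> simp [hrow, hcol]
    · simp [dotProduct, Fintype.sum_prod_type, mul_comm]
  · rintro ⟨x, hx, hxM, rfl⟩
    rw [vecMul_marginalMatrix] at hxM
    exact ⟨fun i j => x (i, j), ⟨fun i j => hx _, fun i => congrFun hxM (Sum.inl i),
      fun j => congrFun hxM (Sum.inr j)⟩, by simp [dotProduct, Fintype.sum_prod_type, mul_comm]⟩

lemma potentialValues_eq (C : Matrix α β ℝ) (r : α → ℝ) (c : β → ℝ) :
    potentialValues C r c = {v | ∃ y, marginalMatrix α β *ᵥ y ≤ (fun p => C p.1 p.2) ∧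
      v = Sum.elim r c ⬝ᵥ y} := by
  ext v
  constructor
  · rintro ⟨f, g, hfg, rfl⟩
    refine ⟨Sum.elim f g, ?_, ?_⟩
    · rw [marginalMatrix_mulVec]
      exact fun p => hfg p.1 p.2
    · simp [dotProduct, Fintype.sum_sum_type, mul_comm]
  · rintro ⟨y, hy, rfl⟩
    rw [marginalMatrix_mulVec] at hy
    exact ⟨y ∘ Sum.inl, y ∘ Sum.inr, fun i j => hy (i, j),
      by simp [dotProduct, Fintype.sum_sum_type, mul_comm]⟩

end MarginalMatrix

theorem exists_isGLB_transportCosts_isLUB_potentialValues (C : Matrix α β ℝ) {r : α → ℝ}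
    {c : β → ℝ} (hr : 0 ≤ r) (hc : 0 ≤ c) (hrc : ∑ i, r i = ∑ j, c j) :
    ∃ v, IsGLB (transportCosts C r c) v ∧ IsLUB (potentialValues C r c) v := by
  classical
  obtain ⟨x, hx, hxM, -⟩ := (transportCosts_eq C r c).subset
    ⟨_, div_sum_mem_transportPlans hr hc hrc, rfl⟩
  obtain ⟨m, hm⟩ := (Set.finite_range fun p : α × β => C p.1 p.2).bddBelow
  rw [transportCosts_eq, potentialValues_eq]
  refine exists_isGLB_primal_isLUB_dual ⟨x, hx, hxM⟩ ⟨Sum.elim (fun _ => m) 0, fun p => ?_⟩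
  simpa [marginalMatrix_mulVec] using hm ⟨p, rfl⟩

end Kantorovich

section ParallelTransport

open scoped Pointwise

variable {m n k l : ℕ} (CA : Matrix (Fin m) (Fin n) ℝ) (CB : Matrix (Fin k) (Fin l) ℝ)
  (a : Fin (m + k) → ℝ) (b : Fin (n + l) → ℝ)

lemma parallel_transportCosts_eq_add :
    {v : ℝ | ∃ (PA : Matrix (Fin m) (Fin n) ℝ) (PB : Matrix (Fin k) (Fin l) ℝ),
        (∀ i j, 0 ≤ PA i j) ∧ (∀ i j, 0 ≤ PB i j) ∧
        (∀ i : Fin m, ∑ j, PA i j = a (Fin.castAdd k i)) ∧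
        (∀ j : Fin n, ∑ i, PA i j = b (Fin.castAdd l j)) ∧
        (∀ i : Fin k, ∑ j, PB i j = a (Fin.natAdd m i)) ∧
        (∀ j : Fin l, ∑ i, PB i j = b (Fin.natAdd n j)) ∧
        v = dotM CA PA + dotM CB PB} =
      transportCosts CA (fun i => a (Fin.castAdd k i)) (fun j => b (Fin.castAdd l j)) +
        transportCosts CB (fun i => a (Fin.natAdd m i)) (fun j => b (Fin.natAdd n j)) := by
  ext v
  constructor
  · rintro ⟨PA, PB, hA, hB, hrA, hcA, hrB, hcB, rfl⟩
    exact ⟨_, ⟨PA, ⟨hA, hrA, hcA⟩, rfl⟩, _, ⟨PB, ⟨hB, hrB, hcB⟩, rfl⟩, rfl⟩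
  · rintro ⟨_, ⟨PA, ⟨hA, hrA, hcA⟩, rfl⟩, _, ⟨PB, ⟨hB, hrB, hcB⟩, rfl⟩, rfl⟩
    exact ⟨PA, PB, hA, hB, hrA, hcA, hrB, hcB, rfl⟩

lemma parallel_potentialValues_eq_add :
    {v : ℝ | ∃ (f : Fin (m + k) → ℝ) (g : Fin (n + l) → ℝ),
        (∀ (i : Fin m) (j : Fin n), f (Fin.castAdd k i) + g (Fin.castAdd l j) ≤ CA i j) ∧
        (∀ (i : Fin k) (j : Fin l), f (Fin.natAdd m i) + g (Fin.natAdd n j) ≤ CB i j) ∧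
        v = ∑ i, f i * a i + ∑ j, g j * b j} =
      potentialValues CA (fun i => a (Fin.castAdd k i)) (fun j => b (Fin.castAdd l j)) +
        potentialValues CB (fun i => a (Fin.natAdd m i)) (fun j => b (Fin.natAdd n j)) := by
  ext v
  constructor
  · rintro ⟨f, g, hA, hB, rfl⟩
    refine ⟨_, ⟨_, _, hA, rfl⟩, _, ⟨_, _, hB, rfl⟩, ?_⟩
    rw [Fin.sum_univ_add, Fin.sum_univ_add]
    ring
  · rintro ⟨_, ⟨fA, gA, hA, rfl⟩, _, ⟨fB, gB, hB, rfl⟩, rfl⟩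
    refine ⟨Fin.append fA fB, Fin.append gA gB, by simpa using hA, by simpa using hB, ?_⟩
    simp only [Fin.sum_univ_add, Fin.append_left, Fin.append_right]
    ring

end ParallelTransport

theorem parOT_strong_duality {m n k l : ℕ}
    (CA : Matrix (Fin m) (Fin n) ℝ) (CB : Matrix (Fin k) (Fin l) ℝ)
    (a : Fin (m + k) → ℝ) (b : Fin (n + l) → ℝ)
    (ha : (∀ i, 0 ≤ a i) ∧ ∑ i, a i = 1) (hb : (∀ j, 0 ≤ b j) ∧ ∑ j, b j = 1)
    (hbal : ∑ i : Fin m, a (Fin.castAdd k i) = ∑ j : Fin n, b (Fin.castAdd l j)) :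
    sInf {v : ℝ | ∃ (PA : Matrix (Fin m) (Fin n) ℝ) (PB : Matrix (Fin k) (Fin l) ℝ),
        (∀ i j, 0 ≤ PA i j) ∧ (∀ i j, 0 ≤ PB i j) ∧
        (∀ i : Fin m, ∑ j, PA i j = a (Fin.castAdd k i)) ∧
        (∀ j : Fin n, ∑ i, PA i j = b (Fin.castAdd l j)) ∧
        (∀ i : Fin k, ∑ j, PB i j = a (Fin.natAdd m i)) ∧
        (∀ j : Fin l, ∑ i, PB i j = b (Fin.natAdd n j)) ∧
        v = dotM CA PA + dotM CB PB}
    = sSup {v : ℝ | ∃ (f : Fin (m + k) → ℝ) (g : Fin (n + l) → ℝ),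
        (∀ (i : Fin m) (j : Fin n), f (Fin.castAdd k i) + g (Fin.castAdd l j) ≤ CA i j) ∧
        (∀ (i : Fin k) (j : Fin l), f (Fin.natAdd m i) + g (Fin.natAdd n j) ≤ CB i j) ∧
        v = ∑ i, f i * a i + ∑ j, g j * b j} := by
  have hbalB : ∑ i : Fin k, a (Fin.natAdd m i) = ∑ j : Fin l, b (Fin.natAdd n j) := by
    have ha₁ := ha.2
    have hb₁ := hb.2
    rw [Fin.sum_univ_add] at ha₁ hb₁
    linarith
  obtain ⟨vA, hPA, hDA⟩ := exists_isGLB_transportCosts_isLUB_potentialValues CA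
    (fun i => ha.1 _) (fun j => hb.1 _) hbal
  obtain ⟨vB, hPB, hDB⟩ := exists_isGLB_transportCosts_isLUB_potentialValues CB
    (fun i => ha.1 _) (fun j => hb.1 _) hbalB
  rw [parallel_transportCosts_eq_add, parallel_potentialValues_eq_add,
    (hPA.add hPB).csInf_eq (hPA.add hPB).nonempty, (hDA.add hDB).csSup_eq (hDA.add hDB).nonempty]
end
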